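/- arXiv:1410.0641 — 5 statements merged into one kernel-verified Lean document; each statement's English description precedes it below -/
import Mathlib

section
/- Let (a_n)_{n∈ℕ} and (b_n)_{n∈ℕ} be nonnegative real sequences such that ∑_{n∈ℕ} b_n < +∞ and a_{n+1} ≤ a·a_n + b·a_{n−1} + b_n for all n ≥ 1, where a ∈ ℝ, b ≥ 0 and a + b < 1. Then ∑_{n∈ℕ} a_n < +∞. -/
open Filter Topology

/-- Lemma 2.3: if `(a n)`, `(b n)` are nonnegative, `∑ b n < +∞` and
`a (n+1) ≤ ca·a n + cb·a (n-1) + b n` for all `n ≥ 1` with `cb ≥ 0` and `ca + cb < 1`,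
then `∑ a n < +∞`. -/
theorem stmt1 (a b : ℕ → ℝ) (ha : ∀ n, 0 ≤ a n) (hb : ∀ n, 0 ≤ b n)
    (hbsum : Summable b) (ca cb : ℝ) (hcb : 0 ≤ cb) (hcacb : ca + cb < 1)
    (hrec : ∀ n, 1 ≤ n → a (n + 1) ≤ ca * a n + cb * a (n - 1) + b n) :
    Summable a := by
  set S : ℕ → ℝ := fun N => ∑ i ∈ Finset.range N, a i with hS
  set B : ℝ := ∑' n, b n with hBdef
  have hB0 : 0 ≤ B := tsum_nonneg hb
  have hBpart : ∀ N, ∑ k ∈ Finset.range N, b (k + 1) ≤ B := by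
    intro N
    have h1 : ∑ i ∈ Finset.range (N + 1), b i
        = ∑ k ∈ Finset.range N, b (k + 1) + b 0 := Finset.sum_range_succ' b N
    have h2 : ∑ i ∈ Finset.range (N + 1), b i ≤ B :=
      Summable.sum_le_tsum _ (fun i _ => hb i) hbsum
    have := hb 0
    linarith
  have hSnn : ∀ N, 0 ≤ S N := fun N => Finset.sum_nonneg fun i _ => ha i
  have hSmono : ∀ N, S N ≤ S (N + 1) := by
    intro N
    simp only [hS, Finset.sum_range_succ]
    linarith [ha N]
  set r : ℝ := max (ca + cb) 0 with hrdef
  have hr0 : 0 ≤ r := le_max_right _ _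
  have hr1 : r < 1 := max_lt hcacb one_pos
  set K : ℝ := a 0 + a 1 + |ca| * a 0 + B with hKdef
  have hK0 : 0 ≤ K := by
    have := ha 0; have := ha 1
    have : 0 ≤ |ca| * a 0 := mul_nonneg (abs_nonneg _) (ha 0)
    simp only [hKdef]; linarith [ha 0, ha 1]
  set c : ℝ := K / (1 - r) with hcdef
  have hc0 : 0 ≤ c := div_nonneg hK0 (by linarith)
  have hKc : K ≤ c := by
    rw [hcdef, le_div_iff₀ (by linarith : (0:ℝ) < 1 - r)]
    nlinarith
  have key : ∀ N, S N ≤ c := by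
    intro N
    match N with
    | 0 => simpa [hS] using hc0
    | 1 =>
      have : S 1 = a 0 := by simp [hS]
      rw [this]
      have : 0 ≤ |ca| * a 0 := mul_nonneg (abs_nonneg _) (ha 0)
      have := ha 1
      linarith
    | (M + 2) =>
      -- sum the recurrence
      have hsum : ∑ k ∈ Finset.range M, a (k + 2)
          ≤ ∑ k ∈ Finset.range M, (ca * a (k + 1) + cb * a k + b (k + 1)) := by
        apply Finset.sum_le_sum
        intro k _
        have := hrec (k + 1) (by omega)
        simpa using this
      have hsplit : S (M + 2) = a 0 + a 1 + ∑ k ∈ Finset.range M, a (k + 2) := by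
        simp only [hS]
        rw [Finset.sum_range_succ' a (M + 1), Finset.sum_range_succ' (fun i => a (i + 1)) M]
        ring
      have hsplit1 : S (M + 1) = a 0 + ∑ k ∈ Finset.range M, a (k + 1) := by
        simp only [hS]; rw [Finset.sum_range_succ' a M]; ring
      have hrhs : ∑ k ∈ Finset.range M, (ca * a (k + 1) + cb * a k + b (k + 1))
          = ca * (S (M + 1) - a 0) + cb * S M + ∑ k ∈ Finset.range M, b (k + 1) := by
        rw [Finset.sum_add_distrib, Finset.sum_add_distrib, ← Finset.mul_sum,
          ← Finset.mul_sum, hsplit1, hS]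
        ring
      have h1 : S (M + 2) ≤ a 0 + a 1 + ca * S (M + 1) - ca * a 0 + cb * S M + B := by
        have := hBpart M
        rw [hsplit]
        rw [hrhs] at hsum
        linarith
      have h2 : ca * S (M + 1) + cb * S M ≤ r * S (M + 2) := by
        have hm1 : S M ≤ S (M + 1) := hSmono M
        have hm2 : S (M + 1) ≤ S (M + 2) := hSmono (M + 1)
        have hA : ca * S (M + 1) + cb * S M ≤ (ca + cb) * S (M + 1) := by nlinarith
        have hB' : (ca + cb) * S (M + 1) ≤ r * S (M + 1) := by
          have : ca + cb ≤ r := le_max_left _ _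
          nlinarith [hSnn (M + 1)]
        have hC : r * S (M + 1) ≤ r * S (M + 2) := by nlinarith
        linarith
      have h3 : -(ca * a 0) ≤ |ca| * a 0 := by
        nlinarith [neg_abs_le ca, ha 0]
      have h4 : S (M + 2) ≤ K + r * S (M + 2) := by
        rw [hKdef]; linarith
      have h5 : S (M + 2) * (1 - r) ≤ K := by linarith
      rw [hcdef, le_div_iff₀ (by linarith : (0:ℝ) < 1 - r)]
      exact h5
  exact summable_of_sum_range_le ha key
end

section
/- In the setting of Problem 1, let (x_n)_{n∈ℕ} be a sequence generated by Algorithm 1. Then for every μ > 0 one has (f+g)(x_{n+1}) + M_1‖x_n − x_{n+1}‖² ≤ (f+g)(x_n) + M_2‖x_{n−1} − x_n‖² for all n ≥ 1, where M_1 = (σ − ᾱL_{∇g})/(2ᾱ) − μβ/(2α̲) and M_2 = β/(2μα̲). -/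
open Filter Topology RealInnerProductSpace

noncomputable section

variable {E : Type*} [NormedAddCommGroup E] [InnerProductSpace ℝ E]

/-- The Fréchet (viscosity) subdifferential of an extended-real-valued function `h` at `x`:
`v` belongs to it iff `x ∈ dom h` and
`liminf_{y → x} (h y - h x - ⟪v, y - x⟫)/‖y - x‖ ≥ 0`, expressed equivalently by the
epsilon-characterization of the liminf. -/
def frechetSubdiff (h : E → EReal) (x : E) : Set E :=
  {v | h x ≠ ⊤ ∧ ∀ ε : ℝ, 0 < ε →
    ∀ᶠ y in 𝓝 x, (((h x).toReal + ⟪v, y - x⟫ - ε * ‖y - x‖ : ℝ) : EReal) ≤ h y}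

/-- The limiting (Mordukhovich) subdifferential of `h` at `x`. -/
def limitingSubdiff (h : E → EReal) (x : E) : Set E :=
  {v | h x ≠ ⊤ ∧ ∃ xk vk : ℕ → E,
    Tendsto xk atTop (𝓝 x) ∧
    Tendsto (fun k => h (xk k)) atTop (𝓝 (h x)) ∧
    (∀ k, vk k ∈ frechetSubdiff h (xk k)) ∧
    Tendsto vk atTop (𝓝 v)}

/-! Compare the model minimized by `x (n+1)` with its value at `u = x n`. Strong convexity of `F`
bounds `D_F(x_{n+1}, x_n)` below by `σ/2 ‖x_{n+1} - x_n‖²`, the descent lemma bounds the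
linearization error of `g` by `L_{∇g}/2 ‖x_{n+1} - x_n‖²`, and Young's inequality with weight `μ`
absorbs the inertial term. This is the claim for the constant parameters `α̲ = ᾱ = α_n`,
`β = β_n`; the general one follows since `M₁` only decreases and `M₂` only increases when the
parameter range widens. -/

open Set

lemma EReal.exists_coe_of_coe_add_mul_le {a b : EReal} (ha : a ≠ ⊥) (hb : b ≠ ⊥) (hb' : b ≠ ⊤)
    {c r s : ℝ} (hc : 0 < c) (h : (r : EReal) + c * a ≤ s + c * b) :
    ∃ a' b' : ℝ, a = a' ∧ b = b' ∧ r + c * a' ≤ s + c * b' := by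
  have ha' : a ≠ ⊤ := by
    rintro rfl
    rw [← EReal.coe_toReal hb' hb, EReal.coe_mul_top_of_pos hc, EReal.coe_add_top,
      ← EReal.coe_mul, ← EReal.coe_add, top_le_iff] at h
    exact EReal.coe_ne_top _ h
  refine ⟨a.toReal, b.toReal, (EReal.coe_toReal ha' ha).symm, (EReal.coe_toReal hb' hb).symm, ?_⟩
  rw [← EReal.coe_toReal ha' ha, ← EReal.coe_toReal hb' hb] at h
  exact_mod_cast h

lemma real_inner_le_mul_sq_add_sq_div {μ : ℝ} (hμ : 0 < μ) (a b : E) :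
    ⟪a, b⟫ ≤ μ / 2 * ‖a‖ ^ 2 + ‖b‖ ^ 2 / (2 * μ) := by
  have hsq : 0 ≤ (μ * ‖a‖ - ‖b‖) ^ 2 / (2 * μ) := by positivity
  have hexpand : (μ * ‖a‖ - ‖b‖) ^ 2 / (2 * μ)
      = μ / 2 * ‖a‖ ^ 2 + ‖b‖ ^ 2 / (2 * μ) - ‖a‖ * ‖b‖ := by
    field_simp
    ring
  linarith [real_inner_le_norm a b]

lemma hasDerivAt_add_smul (v Δ : E) (s : ℝ) : HasDerivAt (fun t : ℝ => v + t • Δ) Δ s := by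
  simpa using ((hasDerivAt_id s).smul_const Δ).const_add v

-- The constants `M₁` and `M₂` of the paper.
def decreaseCoeff (σ L μ αlo αhi β : ℝ) : ℝ := (σ - αhi * L) / (2 * αhi) - μ * β / (2 * αlo)

def inertiaCoeff (μ αlo β : ℝ) : ℝ := β / (2 * μ * αlo)

lemma decreaseCoeff_le {σ L μ αlo αhi β a b : ℝ} (hσ : 0 ≤ σ) (hμ : 0 < μ) (hαlo : 0 < αlo)
    (ha : a ∈ Icc αlo αhi) (hb : b ∈ Icc 0 β) :
    decreaseCoeff σ L μ αlo αhi β ≤ decreaseCoeff σ L μ a a b := by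
  have ha₀ : 0 < a := hαlo.trans_le ha.1
  have hβ : 0 ≤ β := hb.1.trans hb.2
  have hsplit : ∀ t : ℝ, 0 < t → (σ - t * L) / (2 * t) = σ / (2 * t) - L / 2 := fun t ht => by
    field_simp
  rw [decreaseCoeff, decreaseCoeff, hsplit a ha₀, hsplit αhi (ha₀.trans_le ha.2)]
  gcongr
  exacts [ha.2, hb.2, ha.1]

lemma inertiaCoeff_le {μ αlo β a b : ℝ} (hμ : 0 < μ) (hαlo : 0 < αlo) (ha : αlo ≤ a)
    (hb : b ∈ Icc 0 β) :
    inertiaCoeff μ a b ≤ inertiaCoeff μ αlo β := by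
  have hβ : 0 ≤ β := hb.1.trans hb.2
  rw [inertiaCoeff, inertiaCoeff]
  gcongr
  exact hb.2

section Bregman

variable [CompleteSpace E] {F g : E → ℝ}

def bregmanDist (F : E → ℝ) (u v : E) : ℝ := F u - F v - ⟪gradient F v, u - v⟫

lemma Differentiable.hasDerivAt_comp_add_smul (hg : Differentiable ℝ g) (v Δ : E) (s : ℝ) :
    HasDerivAt (fun t : ℝ => g (v + t • Δ)) ⟪gradient g (v + s • Δ), Δ⟫ s := by
  rw [inner_gradient_left]
  exact (hg _).hasFDerivAt.comp_hasDerivAt s (hasDerivAt_add_smul v Δ s)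

lemma le_bregmanDist_of_convexOn_sub_sq {σ : ℝ} (hF : Differentiable ℝ F)
    (hconv : ConvexOn ℝ univ fun z => F z - σ / 2 * ‖z‖ ^ 2) (u v : E) :
    σ / 2 * ‖u - v‖ ^ 2 ≤ bregmanDist F u v := by
  set Δ := u - v
  have hu : u = v + Δ := by simp [Δ]
  let φ : ℝ → ℝ := fun t => F (v + t • Δ) - σ / 2 * ‖v + t • Δ‖ ^ 2
  have hφconv : ConvexOn ℝ univ φ := by
    refine (hconv.comp_affineMap (AffineMap.lineMap v u)).congr fun t _ => ?_
    simp [φ, AffineMap.lineMap_apply_module', Δ, add_comm]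
  have hφ' := (hF.hasDerivAt_comp_add_smul v Δ 0).sub
    ((hasDerivAt_add_smul v Δ 0).norm_sq.const_mul (σ / 2))
  have hslope := hφconv.le_slope_of_hasDerivAt (mem_univ 0) (mem_univ 1) zero_lt_one hφ'
  simp only [slope_def_field, φ, one_smul, zero_smul, add_zero, sub_zero, div_one] at hslope
  rw [norm_add_sq_real] at hslope
  rw [bregmanDist, hu, add_sub_cancel_left]
  linarith

lemma bregmanDist_le_of_lipschitz_gradient {L : ℝ} (hg : Differentiable ℝ g)
    (hlip : ∀ z w, ‖gradient g z - gradient g w‖ ≤ L * ‖z - w‖) (u v : E) :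
    bregmanDist g u v ≤ L / 2 * ‖u - v‖ ^ 2 := by
  set Δ := u - v
  have hu : u = v + Δ := by simp [Δ]
  let φ : ℝ → ℝ := fun t => g (v + t • Δ) - t * ⟪gradient g v, Δ⟫ - L / 2 * ‖Δ‖ ^ 2 * t ^ 2
  let φ' : ℝ → ℝ := fun t => ⟪gradient g (v + t • Δ) - gradient g v, Δ⟫ - L * ‖Δ‖ ^ 2 * t
  have hφ : ∀ t, HasDerivAt φ (φ' t) t := fun t => by
    refine (((hg.hasDerivAt_comp_add_smul v Δ t).sub ((hasDerivAt_id t).mul_const _)).sub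
      ((hasDerivAt_pow 2 t).const_mul (L / 2 * ‖Δ‖ ^ 2))).congr_deriv ?_
    simp only [φ', inner_sub_left]
    ring
  have hφ'_nonpos : ∀ t ∈ interior (Ici (0 : ℝ)), φ' t ≤ 0 := by
    intro t ht
    rw [interior_Ici, mem_Ioi] at ht
    have hgrad : ‖gradient g (v + t • Δ) - gradient g v‖ ≤ L * (t * ‖Δ‖) := by
      simpa [norm_smul, abs_of_pos ht] using hlip (v + t • Δ) v
    have := real_inner_le_norm (gradient g (v + t • Δ) - gradient g v) Δ
    linarith [mul_le_mul_of_nonneg_right hgrad (norm_nonneg Δ)]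
  have hanti : AntitoneOn φ (Ici 0) :=
    antitoneOn_of_hasDerivWithinAt_nonpos (convex_Ici 0)
      (fun t _ => (hφ t).continuousAt.continuousWithinAt)
      (fun t _ => (hφ t).hasDerivWithinAt) hφ'_nonpos
  have h10 : φ 1 ≤ φ 0 := hanti self_mem_Ici (by norm_num : (1 : ℝ) ∈ Ici 0) zero_le_one
  simp only [φ, one_smul, zero_smul, add_zero, one_mul, zero_mul, sub_zero,
    one_pow, mul_one] at h10
  rw [bregmanDist, hu, add_sub_cancel_left]
  linarith

lemma sufficient_decrease_of_le_model {σ L μ a b fv fw : ℝ} {p v w : E}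
    (hF : Differentiable ℝ F) (hconv : ConvexOn ℝ univ fun z => F z - σ / 2 * ‖z‖ ^ 2)
    (hg : Differentiable ℝ g) (hlip : ∀ z w, ‖gradient g z - gradient g w‖ ≤ L * ‖z - w‖)
    (hμ : 0 < μ) (ha : 0 < a) (hb : 0 ≤ b)
    (hmodel : bregmanDist F w v + a * ⟪w, gradient g v⟫ + b * ⟪w, p - v⟫ + a * fw
      ≤ a * ⟪v, gradient g v⟫ + b * ⟪v, p - v⟫ + a * fv) :
    fw + g w + decreaseCoeff σ L μ a a b * ‖v - w‖ ^ 2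
      ≤ fv + g v + inertiaCoeff μ a b * ‖p - v‖ ^ 2 := by
  have hF_lower := le_bregmanDist_of_convexOn_sub_sq hF hconv w v
  have hg_upper := bregmanDist_le_of_lipschitz_gradient hg hlip w v
  have hyoung := real_inner_le_mul_sq_add_sq_div hμ (v - w) (p - v)
  rw [bregmanDist] at hg_upper
  rw [norm_sub_rev] at hF_lower hg_upper
  simp only [inner_sub_left, inner_sub_right, real_inner_comm (gradient g v)]
    at hmodel hg_upper hyoung
  rw [← mul_le_mul_iff_of_pos_left ha]
  have hlhs : a * (fw + g w + decreaseCoeff σ L μ a a b * ‖v - w‖ ^ 2)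
      = a * (fw + g w) + (σ / 2 - a * L / 2 - μ * b / 2) * ‖v - w‖ ^ 2 := by
    rw [decreaseCoeff]
    field_simp
  have hrhs : a * (fv + g v + inertiaCoeff μ a b * ‖p - v‖ ^ 2)
      = a * (fv + g v) + b * (‖p - v‖ ^ 2 / (2 * μ)) := by
    rw [inertiaCoeff]
    field_simp
  rw [hlhs, hrhs]
  linarith [mul_le_mul_of_nonneg_left hyoung hb, mul_le_mul_of_nonneg_left hg_upper ha.le]

end Bregman

theorem stmt4_general
    (m : ℕ)
    (f : EuclideanSpace ℝ (Fin m) → EReal)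
    -- `f` is proper (never `⊥`, somewhere finite), lower semicontinuous and bounded below
    (hfbot : ∀ z, f z ≠ ⊥)
    -- `g` is differentiable with `Lg`-Lipschitz gradient
    (g : EuclideanSpace ℝ (Fin m) → ℝ) (Lg : ℝ)
    (hgdiff : Differentiable ℝ g)
    (hglip : ∀ z w, ‖gradient g z - gradient g w‖ ≤ Lg * ‖z - w‖)
    -- `F` is `σ`-strongly convex and differentiable with `LF`-Lipschitz gradient
    (F : EuclideanSpace ℝ (Fin m) → ℝ) (σ : ℝ) (hσ : 0 < σ)
    (hFconv : ConvexOn ℝ Set.univ fun z => F z - σ / 2 * ‖z‖ ^ 2)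
    (hFdiff : Differentiable ℝ F)
    -- parameters of the algorithm
    (αlo αhi β : ℝ) (hαlo : 0 < αlo)
    (α βs : ℕ → ℝ)
    (hα : ∀ n, 1 ≤ n → αlo ≤ α n ∧ α n ≤ αhi)
    (hβs : ∀ n, 1 ≤ n → 0 ≤ βs n ∧ βs n ≤ β)
    -- the sequence generated by Algorithm 1:
    -- `x (n+1)` minimizes `u ↦ D_F(u, x n) + α n • ⟪u, ∇g(x n)⟫ + βs n • ⟪u, x (n-1) - x n⟫ + α n • f u`
    (x : ℕ → EuclideanSpace ℝ (Fin m))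
    (halg : ∀ n, 1 ≤ n → ∀ u,
      ((F (x (n + 1)) - F (x n) - ⟪gradient F (x n), x (n + 1) - x n⟫
          + α n * ⟪x (n + 1), gradient g (x n)⟫
          + βs n * ⟪x (n + 1), x (n - 1) - x n⟫ : ℝ) : EReal)
        + (α n : EReal) * f (x (n + 1))
      ≤ ((F u - F (x n) - ⟪gradient F (x n), u - x n⟫
          + α n * ⟪u, gradient g (x n)⟫
          + βs n * ⟪u, x (n - 1) - x n⟫ : ℝ) : EReal)
        + (α n : EReal) * f u)
    :
    ∀ μ : ℝ, 0 < μ → ∀ n, 1 ≤ n →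
      f (x (n + 1)) + ((g (x (n + 1))
          + ((σ - αhi * Lg) / (2 * αhi) - μ * β / (2 * αlo)) * ‖x n - x (n + 1)‖ ^ 2 : ℝ) : EReal)
      ≤ f (x n) + ((g (x n)
          + (β / (2 * μ * αlo)) * ‖x (n - 1) - x n‖ ^ 2 : ℝ) : EReal) := by
  intro μ hμ n hn
  have hαpos : 0 < α n := hαlo.trans_le (hα n hn).1
  rcases eq_or_ne (f (x n)) ⊤ with htop | hfin
  · rw [htop, EReal.top_add_coe]
    exact le_top
  obtain ⟨fw, fv, hfw, hfv, hmodel⟩ :=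
    EReal.exists_coe_of_coe_add_mul_le (hfbot _) (hfbot _) hfin hαpos (halg n hn (x n))
  have hdecrease := sufficient_decrease_of_le_model (μ := μ) hFdiff hFconv hgdiff hglip hμ hαpos
    (hβs n hn).1 (by simpa [bregmanDist] using hmodel)
  rw [hfw, hfv]
  norm_cast
  calc fw + (g (x (n + 1)) + decreaseCoeff σ Lg μ αlo αhi β * ‖x n - x (n + 1)‖ ^ 2)
      ≤ fw + g (x (n + 1)) + decreaseCoeff σ Lg μ (α n) (α n) (βs n) * ‖x n - x (n + 1)‖ ^ 2 := by
        rw [← add_assoc]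
        gcongr _ + ?_ * _
        exact decreaseCoeff_le hσ.le hμ hαlo (hα n hn) (hβs n hn)
    _ ≤ fv + g (x n) + inertiaCoeff μ (α n) (βs n) * ‖x (n - 1) - x n‖ ^ 2 := hdecrease
    _ ≤ fv + (g (x n) + inertiaCoeff μ αlo β * ‖x (n - 1) - x n‖ ^ 2) := by
        rw [← add_assoc]
        gcongr _ + ?_ * _
        exact inertiaCoeff_le hμ hαlo (hα n hn).1 (hβs n hn)

/-- Lemma 3.1, first part: a sufficient decrease inequality for the iterates of
Algorithm 1. For every `μ > 0` and `n ≥ 1`,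
`(f+g)(x_{n+1}) + M1‖x_n - x_{n+1}‖² ≤ (f+g)(x_n) + M2‖x_{n-1} - x_n‖²`
with `M1 = (σ - αhi·Lg)/(2αhi) - μβ/(2αlo)` and `M2 = β/(2μαlo)`. -/
theorem stmt4
    (m : ℕ)
    (f : EuclideanSpace ℝ (Fin m) → EReal)
    -- `f` is proper (never `⊥`, somewhere finite), lower semicontinuous and bounded below
    (hfbot : ∀ z, f z ≠ ⊥) (hfproper : ∃ z, f z ≠ ⊤)
    (hflsc : LowerSemicontinuous f)
    (hfbdd : ∃ cl : ℝ, ∀ z, (cl : EReal) ≤ f z)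
    -- `g` is differentiable with `Lg`-Lipschitz gradient
    (g : EuclideanSpace ℝ (Fin m) → ℝ) (Lg : ℝ) (hLg : 0 ≤ Lg)
    (hgdiff : Differentiable ℝ g)
    (hglip : ∀ z w, ‖gradient g z - gradient g w‖ ≤ Lg * ‖z - w‖)
    -- `F` is `σ`-strongly convex and differentiable with `LF`-Lipschitz gradient
    (F : EuclideanSpace ℝ (Fin m) → ℝ) (σ LF : ℝ) (hσ : 0 < σ) (hLF : 0 < LF)
    (hFconv : ConvexOn ℝ Set.univ fun z => F z - σ / 2 * ‖z‖ ^ 2)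
    (hFdiff : Differentiable ℝ F)
    (hFlip : ∀ z w, ‖gradient F z - gradient F w‖ ≤ LF * ‖z - w‖)
    -- parameters of the algorithm
    (αlo αhi β : ℝ) (hαlo : 0 < αlo) (hαorder : αlo ≤ αhi) (hβ : 0 ≤ β)
    (α βs : ℕ → ℝ)
    (hα : ∀ n, 1 ≤ n → αlo ≤ α n ∧ α n ≤ αhi)
    (hβs : ∀ n, 1 ≤ n → 0 ≤ βs n ∧ βs n ≤ β)
    -- the sequence generated by Algorithm 1:
    -- `x (n+1)` minimizes `u ↦ D_F(u, x n) + α n • ⟪u, ∇g(x n)⟫ + βs n • ⟪u, x (n-1) - x n⟫ + α n • f u`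
    (x : ℕ → EuclideanSpace ℝ (Fin m))
    (halg : ∀ n, 1 ≤ n → ∀ u,
      ((F (x (n + 1)) - F (x n) - ⟪gradient F (x n), x (n + 1) - x n⟫
          + α n * ⟪x (n + 1), gradient g (x n)⟫
          + βs n * ⟪x (n + 1), x (n - 1) - x n⟫ : ℝ) : EReal)
        + (α n : EReal) * f (x (n + 1))
      ≤ ((F u - F (x n) - ⟪gradient F (x n), u - x n⟫
          + α n * ⟪u, gradient g (x n)⟫
          + βs n * ⟪u, x (n - 1) - x n⟫ : ℝ) : EReal)
        + (α n : EReal) * f u)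
    :
    ∀ μ : ℝ, 0 < μ → ∀ n, 1 ≤ n →
      f (x (n + 1)) + ((g (x (n + 1))
          + ((σ - αhi * Lg) / (2 * αhi) - μ * β / (2 * αlo)) * ‖x n - x (n + 1)‖ ^ 2 : ℝ) : EReal)
      ≤ f (x n) + ((g (x n)
          + (β / (2 * μ * αlo)) * ‖x (n - 1) - x n‖ ^ 2 : ℝ) : EReal) :=
  stmt4_general m f hfbot g Lg hgdiff hglip F σ hσ hFconv hFdiff αlo αhi β hαlo α βs hα hβs x halg
end
end

section
/- In the setting of Problem 1, choose μ > 0, α̲ > 0 and β ≥ 0 satisfying μ(σ − L_{∇g}α̲) > β(μ² + 1), define M_1 = (σ − ᾱL_{∇g})/(2ᾱ) − μβ/(2α̲) and M_2 = β/(2μα̲), and choose ᾱ > α̲ such that M_1 > M_2. Assume f + g is bounded from below, and let (x_n)_{n∈ℕ} be a sequence generated by Algorithm 1. Then the sequence ((f+g)(x_n) + M_2‖x_{n−1} − x_n‖²)_{n≥1} is monotonically decreasing and convergent, and the sequence ((f+g)(x_n))_{n∈ℕ} is convergent. -/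
/-!
Test the minimality of `x (n+1)` against `u = x n`. Strong convexity of `F` bounds the Bregman
term below by `σ/2 ‖x (n+1) - x n‖²`, the descent lemma bounds `g (x (n+1))` above, and Young's
inequality with weight `μ` splits the inertial term. Dividing by `α n ∈ [αlo, αhi]` gives
`H (n+1) + (M1 - M2) ‖x n - x (n+1)‖² ≤ H n` for `H n = (f + g)(x n) + M2 ‖x (n-1) - x n‖²`.
So `H` is nonincreasing and, `f + g` being bounded below, convergent; the steps then tend to `0`,
and `(f + g)(x n)` has the same limit.
-/

open Filter Topology RealInnerProductSpace

noncomputable section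

variable {E : Type*} [NormedAddCommGroup E] [InnerProductSpace ℝ E]

theorem ConvexOn.add_le_of_hasFDerivAt {V : Type*} [NormedAddCommGroup V] [NormedSpace ℝ V]
    {h : V → ℝ} {h' : V →L[ℝ] ℝ} {x : V} (hc : ConvexOn ℝ Set.univ h) (hd : HasFDerivAt h h' x)
    (y : V) : h x + h' (y - x) ≤ h y := by
  let ℓ : ℝ →ᵃ[ℝ] V := AffineMap.lineMap x y
  have hline : HasDerivAt (h ∘ ℓ) (h' (y - x)) 0 :=
    hd.comp_hasDerivAt_of_eq (0 : ℝ) AffineMap.hasDerivAt_lineMap (by simp [ℓ])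
  have := (hc.comp_affineMap ℓ).le_slope_of_hasDerivAt
    (Set.mem_univ (0 : ℝ)) (Set.mem_univ 1) zero_lt_one hline
  simp only [slope_def_field, Function.comp_apply, AffineMap.lineMap_apply_one,
    AffineMap.lineMap_apply_zero, sub_zero, div_one, ℓ] at this
  linarith

theorem EReal.ne_top_of_coe_add_mul_le {a b α : ℝ} {y z : EReal} (hα : 0 < α) (hz : z ≠ ⊤)
    (h : (a : EReal) + α * y ≤ b + α * z) : y ≠ ⊤ := by
  rintro rfl
  rw [EReal.coe_mul_top_of_pos hα, EReal.coe_add_top, top_le_iff] at h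
  induction z using EReal.rec with
  | bot => rw [EReal.coe_mul_bot_of_pos hα, EReal.add_bot] at h; exact bot_ne_top h
  | coe z => exact EReal.coe_ne_top _ (by exact_mod_cast h)
  | top => exact hz rfl

theorem EReal.add_mul_toReal_le_of_coe_add_mul_le {a b α : ℝ} {y z : EReal} (hy : y ≠ ⊥)
    (hy' : y ≠ ⊤) (hz : z ≠ ⊥) (hz' : z ≠ ⊤) (h : (a : EReal) + α * y ≤ b + α * z) :
    a + α * y.toReal ≤ b + α * z.toReal := by
  rw [← EReal.coe_toReal hy' hy, ← EReal.coe_toReal hz' hz] at h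
  exact_mod_cast h

theorem EReal.add_coe_le_add_coe {y z : EReal} {r s : ℝ} (hy : y ≠ ⊥) (hy' : y ≠ ⊤) (hz : z ≠ ⊥)
    (h : z ≠ ⊤ → y.toReal + r ≤ z.toReal + s) : y + r ≤ z + s := by
  rcases eq_or_ne z ⊤ with rfl | hz'
  · rw [EReal.top_add_coe]
    exact le_top
  rw [← EReal.coe_toReal hy' hy, ← EReal.coe_toReal hz' hz, ← EReal.coe_add, ← EReal.coe_add]
  exact EReal.coe_le_coe_iff.2 (h hz')

theorem EReal.tendsto_add_coe_of_tendsto_toReal_add {y : ℕ → EReal} {r : ℕ → ℝ} {l : ℝ}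
    (hbot : ∀ n, y n ≠ ⊥) (htop : ∀ᶠ n in atTop, y n ≠ ⊤)
    (h : Tendsto (fun n => (y n).toReal + r n) atTop (𝓝 l)) :
    Tendsto (fun n => y n + (r n : EReal)) atTop (𝓝 (l : EReal)) := by
  refine (EReal.tendsto_coe.2 h).congr' ?_
  filter_upwards [htop] with n hn
  rw [EReal.coe_add, EReal.coe_toReal hn (hbot n)]

theorem exists_tendsto_of_add_mul_le {e s : ℕ → ℝ} {c : ℝ} (hc : 0 < c) (hs : ∀ n, 0 ≤ s n)
    (hdec : ∀ n, e (n + 1) + c * s n ≤ e n) (hbdd : BddBelow (Set.range e)) :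
    ∃ l, Tendsto e atTop (𝓝 l) ∧ Tendsto s atTop (𝓝 0) := by
  have hanti : Antitone e := antitone_nat_of_succ_le fun n => by nlinarith [hdec n, hs n]
  have he := tendsto_atTop_ciInf hanti hbdd
  refine ⟨_, he, squeeze_zero hs (g := fun n => (e n - e (n + 1)) / c) (fun n => ?_) ?_⟩
  · exact (le_div_iff₀' hc).2 (by linarith [hdec n])
  · simpa using (he.sub ((tendsto_add_atTop_iff_nat 1).2 he)).div_const c

theorem exists_tendsto_of_lyapunov_le {φ δ : ℕ → ℝ} {M1 M2 c : ℝ} (hM2 : 0 ≤ M2) (hM : M2 < M1)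
    (hδ : ∀ n, 0 ≤ δ n) (hφ : ∀ n, c ≤ φ n)
    (hstep : ∀ n, φ (n + 1) + M1 * δ (n + 1) ≤ φ n + M2 * δ n) :
    ∃ l, Tendsto (fun n => φ n + M2 * δ n) atTop (𝓝 l) ∧ Tendsto φ atTop (𝓝 l) := by
  obtain ⟨l, he, hδ0⟩ := exists_tendsto_of_add_mul_le (e := fun n => φ n + M2 * δ n)
    (sub_pos.2 hM) (fun n => hδ (n + 1))
    (fun n => by linarith [hstep n]) ⟨c, by
      rintro _ ⟨n, rfl⟩
      nlinarith [hφ n, hδ n]⟩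
  refine ⟨l, he, ?_⟩
  have hMδ : Tendsto (fun n => M2 * δ n) atTop (𝓝 0) := by
    simpa using ((tendsto_add_atTop_iff_nat 1).1 hδ0).const_mul M2
  simpa using he.sub hMδ

theorem neg_mul_inner_le_young {b β μ : ℝ} (hμ : 0 < μ) (hb : 0 ≤ b) (hbβ : b ≤ β) (u v : E) :
    -(b * ⟪u, v⟫) ≤ β * μ / 2 * ‖u‖ ^ 2 + β / (2 * μ) * ‖v‖ ^ 2 := by
  have hβ : 0 ≤ β := hb.trans hbβ
  have hcs : -⟪u, v⟫ ≤ ‖u‖ * ‖v‖ := by simpa using real_inner_le_norm u (-v)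
  have hyoung : 2 * μ * (‖u‖ * ‖v‖) ≤ μ ^ 2 * ‖u‖ ^ 2 + ‖v‖ ^ 2 := by
    nlinarith [sq_nonneg (μ * ‖u‖ - ‖v‖)]
  calc -(b * ⟪u, v⟫) = b * -⟪u, v⟫ := by ring
    _ ≤ b * (‖u‖ * ‖v‖) := mul_le_mul_of_nonneg_left hcs hb
    _ ≤ β * (‖u‖ * ‖v‖) := mul_le_mul_of_nonneg_right hbβ (by positivity)
    _ = β / (2 * μ) * (2 * μ * (‖u‖ * ‖v‖)) := by field_simp
    _ ≤ β / (2 * μ) * (μ ^ 2 * ‖u‖ ^ 2 + ‖v‖ ^ 2) := by gcongr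
    _ = β * μ / 2 * ‖u‖ ^ 2 + β / (2 * μ) * ‖v‖ ^ 2 := by field_simp

variable [CompleteSpace E]

theorem half_mul_sq_norm_sub_le_bregman {F : E → ℝ} {σ : ℝ}
    (hFconv : ConvexOn ℝ Set.univ fun z => F z - σ / 2 * ‖z‖ ^ 2)
    (hFdiff : Differentiable ℝ F) (u v : E) :
    σ / 2 * ‖u - v‖ ^ 2 ≤ F u - F v - ⟪gradient F v, u - v⟫ := by
  have hd := (hFdiff v).hasFDerivAt.sub
    ((hasStrictFDerivAt_norm_sq v).hasFDerivAt.const_mul (σ / 2))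
  have := hFconv.add_le_of_hasFDerivAt hd u
  simp only [sub_apply, smul_apply, coe_innerSL_apply, inner_sub_right,
    real_inner_self_eq_norm_sq, nsmul_eq_mul, Nat.cast_ofNat, smul_eq_mul] at this
  rw [inner_gradient_left, norm_sub_sq_real, real_inner_comm]
  linarith

theorem le_add_inner_gradient_add_sq_of_lipschitz {g : E → ℝ} {L : ℝ} (hg : Differentiable ℝ g)
    (hlip : ∀ z w, ‖gradient g z - gradient g w‖ ≤ L * ‖z - w‖) (x y : E) :
    g y ≤ g x + ⟪gradient g x, y - x⟫ + L / 2 * ‖y - x‖ ^ 2 := by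
  set d := y - x
  -- the claim is `ψ 1 ≤ ψ 0`, and the Lipschitz bound on `∇g` makes `ψ' ≤ 0` on `[0, 1]`
  let ψ : ℝ → ℝ := fun t => g (x + t • d) - t * ⟪gradient g x, d⟫ - L / 2 * t ^ 2 * ‖d‖ ^ 2
  have hψ (t : ℝ) :
      HasDerivAt ψ (⟪gradient g (x + t • d) - gradient g x, d⟫ - L * t * ‖d‖ ^ 2) t := by
    have hline : HasDerivAt (fun s : ℝ => x + s • d) d t := by
      simpa using ((hasDerivAt_id t).smul_const d).const_add x
    refine (((hg _).hasFDerivAt.comp_hasDerivAt t hline).sub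
      ((hasDerivAt_id t).mul_const ⟪gradient g x, d⟫)).sub
      (((hasDerivAt_pow 2 t).const_mul (L / 2)).mul_const (‖d‖ ^ 2)) |>.congr_deriv ?_
    simp only [inner_sub_left, inner_gradient_left]
    ring
  have hanti : AntitoneOn ψ (Set.Icc 0 1) := by
    refine antitoneOn_of_deriv_nonpos (convex_Icc 0 1)
      (fun t _ => (hψ t).continuousAt.continuousWithinAt)
      (fun t _ => (hψ t).differentiableAt.differentiableWithinAt) fun t ht => ?_
    rw [interior_Icc] at ht
    rw [(hψ t).deriv, sub_nonpos]
    calc ⟪gradient g (x + t • d) - gradient g x, d⟫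
        ≤ ‖gradient g (x + t • d) - gradient g x‖ * ‖d‖ := real_inner_le_norm _ _
      _ ≤ L * ‖x + t • d - x‖ * ‖d‖ := by gcongr; exact hlip _ _
      _ = L * t * ‖d‖ ^ 2 := by
        rw [add_sub_cancel_left, norm_smul, Real.norm_of_nonneg ht.1.le]
        ring
  have := hanti (Set.left_mem_Icc.2 zero_le_one) (Set.right_mem_Icc.2 zero_le_one) zero_le_one
  simp only [ψ, d, one_smul, zero_smul, add_zero, add_sub_cancel, one_mul, zero_mul, one_pow,
    sub_zero, ne_eq, OfNat.ofNat_ne_zero, not_false_eq_true, zero_pow, mul_zero] at this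
  linarith

theorem inertial_step_descent {F g : E → ℝ} {σ L α b a an : ℝ} {xp x xn : E}
    (hFconv : ConvexOn ℝ Set.univ fun z => F z - σ / 2 * ‖z‖ ^ 2) (hFdiff : Differentiable ℝ F)
    (hg : Differentiable ℝ g) (hlip : ∀ z w, ‖gradient g z - gradient g w‖ ≤ L * ‖z - w‖)
    (hmin : F xn - F x - ⟪gradient F x, xn - x⟫ + α * ⟪xn, gradient g x⟫ + b * ⟪xn, xp - x⟫
      + α * an ≤ F x - F x - ⟪gradient F x, x - x⟫ + α * ⟪x, gradient g x⟫ + b * ⟪x, xp - x⟫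
      + α * a)
    (hα : 0 ≤ α) :
    α * (an + g xn) + (σ / 2 - α * L / 2) * ‖xn - x‖ ^ 2 + b * ⟪xn - x, xp - x⟫
      ≤ α * (a + g x) := by
  have hbreg := half_mul_sq_norm_sub_le_bregman hFconv hFdiff xn x
  have hdesc := le_add_inner_gradient_add_sq_of_lipschitz hg hlip x xn
  rw [real_inner_comm, inner_sub_left] at hdesc
  rw [inner_sub_left]
  have h0 : F x - F x - ⟪gradient F x, x - x⟫ = 0 := by simp
  linarith [mul_le_mul_of_nonneg_left hdesc hα]

theorem inertial_step_lyapunov_le {F g : E → ℝ} {σ L α b a an αlo αhi β μ : ℝ} {xp x xn : E}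
    (hFconv : ConvexOn ℝ Set.univ fun z => F z - σ / 2 * ‖z‖ ^ 2) (hFdiff : Differentiable ℝ F)
    (hg : Differentiable ℝ g) (hlip : ∀ z w, ‖gradient g z - gradient g w‖ ≤ L * ‖z - w‖)
    (hmin : F xn - F x - ⟪gradient F x, xn - x⟫ + α * ⟪xn, gradient g x⟫ + b * ⟪xn, xp - x⟫
      + α * an ≤ F x - F x - ⟪gradient F x, x - x⟫ + α * ⟪x, gradient g x⟫ + b * ⟪x, xp - x⟫
      + α * a)
    (hσ : 0 ≤ σ) (hαlo : 0 < αlo) (hα : αlo ≤ α) (hα' : α ≤ αhi) (hμ : 0 < μ) (hb : 0 ≤ b)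
    (hbβ : b ≤ β) :
    an + g xn + ((σ - αhi * L) / (2 * αhi) - μ * β / (2 * αlo)) * ‖x - xn‖ ^ 2
      ≤ a + g x + β / (2 * μ * αlo) * ‖xp - x‖ ^ 2 := by
  have hαpos : 0 < α := hαlo.trans_le hα
  have hβ : 0 ≤ β := hb.trans hbβ
  have hdesc := inertial_step_descent hFconv hFdiff hg hlip hmin hαpos.le
  have hyoung := neg_mul_inner_le_young hμ hb hbβ (xn - x) (xp - x)
  have hαhi : 0 < αhi := hαpos.trans_le hα'
  have hhi : α / αhi ≤ 1 := (div_le_one hαhi).2 hα'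
  have hlo : 1 ≤ α / αlo := (one_le_div hαlo).2 hα
  have hM1 : α * ((σ - αhi * L) / (2 * αhi) - μ * β / (2 * αlo))
      ≤ σ / 2 - α * L / 2 - β * μ / 2 := by
    have h : α * ((σ - αhi * L) / (2 * αhi) - μ * β / (2 * αlo))
        = α / αhi * (σ / 2) - α * L / 2 - α / αlo * (β * μ / 2) := by
      field_simp
    rw [h]
    linarith [mul_le_mul_of_nonneg_right hhi (by positivity : 0 ≤ σ / 2),
      mul_le_mul_of_nonneg_right hlo (by positivity : 0 ≤ β * μ / 2)]
  have hM2 : β / (2 * μ) ≤ α * (β / (2 * μ * αlo)) := by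
    have h : α * (β / (2 * μ * αlo)) = α / αlo * (β / (2 * μ)) := by field_simp
    rw [h]
    linarith [mul_le_mul_of_nonneg_right hlo (by positivity : 0 ≤ β / (2 * μ))]
  rw [norm_sub_rev x xn]
  refine le_of_mul_le_mul_left ?_ hαpos
  linarith [mul_le_mul_of_nonneg_right hM1 (sq_nonneg ‖xn - x‖),
    mul_le_mul_of_nonneg_right hM2 (sq_nonneg ‖xp - x‖)]

theorem stmt7_general
    (m : ℕ)
    (f : EuclideanSpace ℝ (Fin m) → EReal)
    -- `f` is proper (never `⊥`, somewhere finite), lower semicontinuous and bounded below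
    (hfbot : ∀ z, f z ≠ ⊥) (hfproper : ∃ z, f z ≠ ⊤)
    -- `g` is differentiable with `Lg`-Lipschitz gradient
    (g : EuclideanSpace ℝ (Fin m) → ℝ) (Lg : ℝ)
    (hgdiff : Differentiable ℝ g)
    (hglip : ∀ z w, ‖gradient g z - gradient g w‖ ≤ Lg * ‖z - w‖)
    -- `F` is `σ`-strongly convex and differentiable with `LF`-Lipschitz gradient
    (F : EuclideanSpace ℝ (Fin m) → ℝ) (σ : ℝ) (hσ : 0 < σ)
    (hFconv : ConvexOn ℝ Set.univ fun z => F z - σ / 2 * ‖z‖ ^ 2)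
    (hFdiff : Differentiable ℝ F)
    -- parameters of the algorithm
    (αlo αhi β : ℝ) (hαlo : 0 < αlo) (hβ : 0 ≤ β)
    (α βs : ℕ → ℝ)
    (hα : ∀ n, 1 ≤ n → αlo ≤ α n ∧ α n ≤ αhi)
    (hβs : ∀ n, 1 ≤ n → 0 ≤ βs n ∧ βs n ≤ β)
    -- the sequence generated by Algorithm 1:
    -- `x (n+1)` minimizes `u ↦ D_F(u, x n) + α n • ⟪u, ∇g(x n)⟫ + βs n • ⟪u, x (n-1) - x n⟫ + α n • f u`
    (x : ℕ → EuclideanSpace ℝ (Fin m))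
    (halg : ∀ n, 1 ≤ n → ∀ u,
      ((F (x (n + 1)) - F (x n) - ⟪gradient F (x n), x (n + 1) - x n⟫
          + α n * ⟪x (n + 1), gradient g (x n)⟫
          + βs n * ⟪x (n + 1), x (n - 1) - x n⟫ : ℝ) : EReal)
        + (α n : EReal) * f (x (n + 1))
      ≤ ((F u - F (x n) - ⟪gradient F (x n), u - x n⟫
          + α n * ⟪u, gradient g (x n)⟫
          + βs n * ⟪u, x (n - 1) - x n⟫ : ℝ) : EReal)
        + (α n : EReal) * f u)
    -- the parameters `μ, αlo, β` satisfy `μ(σ - Lg·αlo) > β(μ² + 1)` and `αhi` is chosen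
    -- with `αlo < αhi` such that `M1 > M2`
    (μ : ℝ) (hμ : 0 < μ)
    (M1 M2 : ℝ)
    (hM1 : M1 = (σ - αhi * Lg) / (2 * αhi) - μ * β / (2 * αlo))
    (hM2 : M2 = β / (2 * μ * αlo))
    (hM : M2 < M1)

    -- `f + g` is bounded from below
    (hfgbdd : ∃ c : ℝ, ∀ z, (c : EReal) ≤ f z + ((g z : ℝ) : EReal))
    :
    (∀ n, 1 ≤ n →
      f (x (n + 1)) + ((g (x (n + 1)) + M2 * ‖x n - x (n + 1)‖ ^ 2 : ℝ) : EReal)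
        ≤ f (x n) + ((g (x n) + M2 * ‖x (n - 1) - x n‖ ^ 2 : ℝ) : EReal)) ∧
    (∃ l : ℝ, Tendsto
      (fun n => f (x n) + ((g (x n) + M2 * ‖x (n - 1) - x n‖ ^ 2 : ℝ) : EReal))
      atTop (𝓝 (l : EReal))) ∧
    (∃ l : ℝ, Tendsto (fun n => f (x n) + ((g (x n) : ℝ) : EReal)) atTop (𝓝 (l : EReal))) := by
  obtain ⟨z₀, hz₀⟩ := hfproper
  obtain ⟨c, hc⟩ := hfgbdd
  -- `x 1` may lie outside `dom f`; the later iterates cannot, as they do better than `z₀ ∈ dom f`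
  have hfin : ∀ n, 2 ≤ n → f (x n) ≠ ⊤ := fun n hn => by
    obtain ⟨k, rfl⟩ := Nat.exists_eq_add_of_le' hn
    exact EReal.ne_top_of_coe_add_mul_le (hαlo.trans_le (hα (k + 1) (by omega)).1) hz₀
      (halg (k + 1) (by omega) z₀)
  have hstep : ∀ n, 1 ≤ n → f (x n) ≠ ⊤ →
      (f (x (n + 1))).toReal + g (x (n + 1)) + M1 * ‖x n - x (n + 1)‖ ^ 2
        ≤ (f (x n)).toReal + g (x n) + M2 * ‖x (n - 1) - x n‖ ^ 2 := fun n hn hfn => by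
    rw [hM1, hM2]
    exact inertial_step_lyapunov_le hFconv hFdiff hgdiff hglip
      (EReal.add_mul_toReal_le_of_coe_add_mul_le (hfbot _) (hfin _ (by omega)) (hfbot _) hfn
        (halg n hn (x n)))
      hσ.le hαlo (hα n hn).1 (hα n hn).2 hμ (hβs n hn).1 (hβs n hn).2
  obtain ⟨l, hE, hφ⟩ := exists_tendsto_of_lyapunov_le
    (φ := fun k => (f (x (k + 2))).toReal + g (x (k + 2)))
    (δ := fun k => ‖x (k + 1) - x (k + 2)‖ ^ 2) (hM2 ▸ div_nonneg hβ (by positivity)) hM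
    (fun _ => sq_nonneg _)
    (fun k => by
      have := hc (x (k + 2))
      rwa [← EReal.coe_toReal (hfin _ le_add_self) (hfbot _), ← EReal.coe_add,
        EReal.coe_le_coe_iff] at this)
    (fun k => hstep (k + 2) (by omega) (hfin _ le_add_self))
  have hfin' : ∀ᶠ n in atTop, f (x n) ≠ ⊤ := eventually_atTop.2 ⟨2, hfin⟩
  refine ⟨fun n hn =>
      EReal.add_coe_le_add_coe (hfbot _) (hfin _ (by omega)) (hfbot _) fun hfn => ?_,
    ⟨l, EReal.tendsto_add_coe_of_tendsto_toReal_add (fun _ => hfbot _) hfin'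
      ((tendsto_add_atTop_iff_nat 2).1 ?_)⟩,
    ⟨l, EReal.tendsto_add_coe_of_tendsto_toReal_add (fun _ => hfbot _) hfin'
      ((tendsto_add_atTop_iff_nat 2).1 hφ)⟩⟩
  · nlinarith [hstep n hn hfn, sq_nonneg ‖x n - x (n + 1)‖]
  · simpa [add_assoc] using hE

/-- Proposition 3.2(b),(c): the sequence `(f+g)(x n) + M2‖x (n-1) - x n‖²` is
monotonically decreasing (from `n = 1` on) and convergent, and `((f+g)(x n))` is
convergent. -/
theorem stmt7
    (m : ℕ)
    (f : EuclideanSpace ℝ (Fin m) → EReal)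
    -- `f` is proper (never `⊥`, somewhere finite), lower semicontinuous and bounded below
    (hfbot : ∀ z, f z ≠ ⊥) (hfproper : ∃ z, f z ≠ ⊤)
    (hflsc : LowerSemicontinuous f)
    (hfbdd : ∃ cl : ℝ, ∀ z, (cl : EReal) ≤ f z)
    -- `g` is differentiable with `Lg`-Lipschitz gradient
    (g : EuclideanSpace ℝ (Fin m) → ℝ) (Lg : ℝ) (hLg : 0 ≤ Lg)
    (hgdiff : Differentiable ℝ g)
    (hglip : ∀ z w, ‖gradient g z - gradient g w‖ ≤ Lg * ‖z - w‖)
    -- `F` is `σ`-strongly convex and differentiable with `LF`-Lipschitz gradient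
    (F : EuclideanSpace ℝ (Fin m) → ℝ) (σ LF : ℝ) (hσ : 0 < σ) (hLF : 0 < LF)
    (hFconv : ConvexOn ℝ Set.univ fun z => F z - σ / 2 * ‖z‖ ^ 2)
    (hFdiff : Differentiable ℝ F)
    (hFlip : ∀ z w, ‖gradient F z - gradient F w‖ ≤ LF * ‖z - w‖)
    -- parameters of the algorithm
    (αlo αhi β : ℝ) (hαlo : 0 < αlo) (hαorder : αlo ≤ αhi) (hβ : 0 ≤ β)
    (α βs : ℕ → ℝ)
    (hα : ∀ n, 1 ≤ n → αlo ≤ α n ∧ α n ≤ αhi)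
    (hβs : ∀ n, 1 ≤ n → 0 ≤ βs n ∧ βs n ≤ β)
    -- the sequence generated by Algorithm 1:
    -- `x (n+1)` minimizes `u ↦ D_F(u, x n) + α n • ⟪u, ∇g(x n)⟫ + βs n • ⟪u, x (n-1) - x n⟫ + α n • f u`
    (x : ℕ → EuclideanSpace ℝ (Fin m))
    (halg : ∀ n, 1 ≤ n → ∀ u,
      ((F (x (n + 1)) - F (x n) - ⟪gradient F (x n), x (n + 1) - x n⟫
          + α n * ⟪x (n + 1), gradient g (x n)⟫
          + βs n * ⟪x (n + 1), x (n - 1) - x n⟫ : ℝ) : EReal)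
        + (α n : EReal) * f (x (n + 1))
      ≤ ((F u - F (x n) - ⟪gradient F (x n), u - x n⟫
          + α n * ⟪u, gradient g (x n)⟫
          + βs n * ⟪u, x (n - 1) - x n⟫ : ℝ) : EReal)
        + (α n : EReal) * f u)
    -- the parameters `μ, αlo, β` satisfy `μ(σ - Lg·αlo) > β(μ² + 1)` and `αhi` is chosen
    -- with `αlo < αhi` such that `M1 > M2`
    (μ : ℝ) (hμ : 0 < μ)
    (hcond : β * (μ ^ 2 + 1) < μ * (σ - Lg * αlo))
    (M1 M2 : ℝ)
    (hM1 : M1 = (σ - αhi * Lg) / (2 * αhi) - μ * β / (2 * αlo))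
    (hM2 : M2 = β / (2 * μ * αlo))
    (hαstrict : αlo < αhi) (hM : M2 < M1)

    -- `f + g` is bounded from below
    (hfgbdd : ∃ c : ℝ, ∀ z, (c : EReal) ≤ f z + ((g z : ℝ) : EReal))
    :
    (∀ n, 1 ≤ n →
      f (x (n + 1)) + ((g (x (n + 1)) + M2 * ‖x n - x (n + 1)‖ ^ 2 : ℝ) : EReal)
        ≤ f (x n) + ((g (x n) + M2 * ‖x (n - 1) - x n‖ ^ 2 : ℝ) : EReal)) ∧
    (∃ l : ℝ, Tendsto
      (fun n => f (x n) + ((g (x n) + M2 * ‖x (n - 1) - x n‖ ^ 2 : ℝ) : EReal))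
      atTop (𝓝 (l : EReal))) ∧
    (∃ l : ℝ, Tendsto (fun n => f (x n) + ((g (x n) : ℝ) : EReal)) atTop (𝓝 (l : EReal))) :=
  stmt7_general m f hfbot hfproper g Lg hgdiff hglip F σ hσ hFconv hFdiff αlo αhi β hαlo hβ α βs hα
    hβs x halg μ hμ M1 M2 hM1 hM2 hM hfgbdd
end
end

section
/- In the setting of Problem 1, let (x_n)_{n∈ℕ} be a sequence generated by Algorithm 1, and for n ≥ 1 define y_{n+1} = (∇F(x_n) − ∇F(x_{n+1}))/α_n + ∇g(x_{n+1}) − ∇g(x_n) + (β_n/α_n)(x_n − x_{n−1}). Then for every n ≥ 1 one has y_{n+1} ∈ ∂(f+g)(x_{n+1}), and moreover ‖y_{n+1}‖ ≤ ((L_{∇F} + α_n L_{∇g})/α_n)‖x_n − x_{n+1}‖ + (β_n/α_n)‖x_n − x_{n−1}‖. -/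
/-!
The iterate `x (n+1)` minimizes a differentiable model `ψ` plus `α n • f`, so Fermat's rule puts
`-(1/α n) • ∇ψ(x (n+1))` in the Fréchet subdifferential of `f`; adding `∇g(x (n+1))` gives exactly
`y (n+1)`, a Fréchet, hence limiting, subgradient of `f + g`. The norm bound is the triangle
inequality combined with the Lipschitz bounds on `∇F` and `∇g`.
-/

open Filter Topology RealInnerProductSpace

noncomputable section

variable {E : Type*} [NormedAddCommGroup E] [InnerProductSpace ℝ E]

theorem frechetSubdiff_subset_limitingSubdiff (h : E → EReal) (x : E) :
    frechetSubdiff h x ⊆ limitingSubdiff h x :=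
  fun v hv => ⟨hv.1, fun _ => x, fun _ => v, tendsto_const_nhds, tendsto_const_nhds,
    fun _ => hv, tendsto_const_nhds⟩

theorem ne_top_of_forall_add_mul_le {α : Type*} {h : α → EReal} {ψ : α → ℝ} {x : α} {c : ℝ}
    (hc : 0 < c) (hproper : ∃ z, h z ≠ ⊤) (hbot : ∀ z, h z ≠ ⊥)
    (hmin : ∀ u, ((ψ x : ℝ) : EReal) + c * h x ≤ ψ u + c * h u) : h x ≠ ⊤ := by
  obtain ⟨z, hz⟩ := hproper
  intro hx
  have hz_le := hmin z
  rw [hx, EReal.mul_top_of_pos (by exact_mod_cast hc), EReal.coe_add_top,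
    ← EReal.coe_toReal hz (hbot z), ← EReal.coe_mul, ← EReal.coe_add] at hz_le
  exact EReal.coe_ne_top _ (top_le_iff.mp hz_le)

theorem neg_smul_mem_frechetSubdiff_of_forall_add_mul_le [CompleteSpace E] {h : E → EReal}
    {ψ : E → ℝ} {x p : E} {c : ℝ} (hc : 0 < c) (hbot : ∀ z, h z ≠ ⊥) (htop : h x ≠ ⊤)
    (hψ : HasGradientAt ψ p x) (hmin : ∀ u, ((ψ x : ℝ) : EReal) + c * h x ≤ ψ u + c * h u) :
    -(1 / c) • p ∈ frechetSubdiff h x := by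
  refine ⟨htop, fun ε hε => ?_⟩
  filter_upwards [(hasGradientAt_iff_isLittleO.mp hψ).def (mul_pos hc hε)] with u hu
  by_cases htopu : h u = ⊤
  · simp [htopu]
  obtain ⟨r, hr⟩ : ∃ r : ℝ, h x = r := ⟨_, (EReal.coe_toReal htop (hbot x)).symm⟩
  obtain ⟨s, hs⟩ : ∃ s : ℝ, h u = s := ⟨_, (EReal.coe_toReal htopu (hbot u)).symm⟩
  have hmin_u : ψ x + c * r ≤ ψ u + c * s := by
    have := hmin u
    rwa [hr, hs, ← EReal.coe_mul, ← EReal.coe_mul, ← EReal.coe_add, ← EReal.coe_add,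
      EReal.coe_le_coe_iff] at this
  have hψ_u : ψ u - ψ x - ⟪p, u - x⟫ ≤ c * ε * ‖u - x‖ := by
    rw [Real.norm_eq_abs] at hu
    exact (abs_le.mp hu).2
  rw [hr, hs, EReal.toReal_coe, EReal.coe_le_coe_iff, real_inner_smul_left]
  refine le_of_mul_le_mul_left ?_ hc
  calc c * (r + -(1 / c) * ⟪p, u - x⟫ - ε * ‖u - x‖)
      = c * r - ⟪p, u - x⟫ - c * ε * ‖u - x‖ := by field_simp; ring
    _ ≤ c * s := by linarith

theorem add_mem_frechetSubdiff_add_of_hasGradientAt [CompleteSpace E] {h : E → EReal}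
    {g : E → ℝ} {x v q : E} (hbot : h x ≠ ⊥) (hv : v ∈ frechetSubdiff h x)
    (hg : HasGradientAt g q x) :
    v + q ∈ frechetSubdiff (fun z => h z + ((g z : ℝ) : EReal)) x := by
  have hsum : h x + ((g x : ℝ) : EReal) = (((h x).toReal + g x : ℝ) : EReal) := by
    rw [EReal.coe_add, EReal.coe_toReal hv.1 hbot]
  refine ⟨by simp only [hsum]; exact EReal.coe_ne_top _, fun ε hε => ?_⟩
  filter_upwards [hv.2 (ε / 2) (half_pos hε),
    (hasGradientAt_iff_isLittleO.mp hg).def (half_pos hε)] with u hhu hgu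
  have hg_u : g x + ⟪q, u - x⟫ - ε / 2 * ‖u - x‖ ≤ g u := by
    rw [Real.norm_eq_abs] at hgu
    linarith [(abs_le.mp hgu).1]
  rw [hsum, EReal.toReal_coe]
  calc ((((h x).toReal + g x + ⟪v + q, u - x⟫ - ε * ‖u - x‖ : ℝ)) : EReal)
      = (((h x).toReal + ⟪v, u - x⟫ - ε / 2 * ‖u - x‖ : ℝ) : EReal)
        + ((g x + ⟪q, u - x⟫ - ε / 2 * ‖u - x‖ : ℝ) : EReal) := by
        rw [← EReal.coe_add, inner_add_left]
        ring_nf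
    _ ≤ h u + ((g u : ℝ) : EReal) := add_le_add hhu (EReal.coe_le_coe hg_u)

theorem norm_smul_sub_add_sub_add_smul_le {A B : E → E} {LA LB a b : ℝ} (ha : 0 < a)
    (hb : 0 ≤ b) (hA : ∀ z w, ‖A z - A w‖ ≤ LA * ‖z - w‖)
    (hB : ∀ z w, ‖B z - B w‖ ≤ LB * ‖z - w‖) (z w v : E) :
    ‖(1 / a) • (A z - A w) + (B w - B z) + (b / a) • v‖
      ≤ (LA + a * LB) / a * ‖z - w‖ + b / a * ‖v‖ := by
  calc ‖(1 / a) • (A z - A w) + (B w - B z) + (b / a) • v‖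
      ≤ 1 / a * ‖A z - A w‖ + ‖B w - B z‖ + b / a * ‖v‖ := by
        refine (norm_add₃_le).trans_eq ?_
        rw [norm_smul, norm_smul, Real.norm_of_nonneg (by positivity),
          Real.norm_of_nonneg (by positivity)]
    _ ≤ 1 / a * (LA * ‖z - w‖) + LB * ‖z - w‖ + b / a * ‖v‖ := by
        gcongr
        · exact hA z w
        · rw [norm_sub_rev z]
          exact hB w z
    _ = (LA + a * LB) / a * ‖z - w‖ + b / a * ‖v‖ := by
        field_simp
theorem stmt8_general
    (m : ℕ)
    (f : EuclideanSpace ℝ (Fin m) → EReal)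
    -- `f` is proper (never `⊥`, somewhere finite), lower semicontinuous and bounded below
    (hfbot : ∀ z, f z ≠ ⊥) (hfproper : ∃ z, f z ≠ ⊤)
    -- `g` is differentiable with `Lg`-Lipschitz gradient
    (g : EuclideanSpace ℝ (Fin m) → ℝ) (Lg : ℝ)
    (hgdiff : Differentiable ℝ g)
    (hglip : ∀ z w, ‖gradient g z - gradient g w‖ ≤ Lg * ‖z - w‖)
    -- `F` is `σ`-strongly convex and differentiable with `LF`-Lipschitz gradient
    (F : EuclideanSpace ℝ (Fin m) → ℝ) (LF : ℝ)
    (hFdiff : Differentiable ℝ F)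
    (hFlip : ∀ z w, ‖gradient F z - gradient F w‖ ≤ LF * ‖z - w‖)
    -- parameters of the algorithm
    (αlo αhi β : ℝ) (hαlo : 0 < αlo)
    (α βs : ℕ → ℝ)
    (hα : ∀ n, 1 ≤ n → αlo ≤ α n ∧ α n ≤ αhi)
    (hβs : ∀ n, 1 ≤ n → 0 ≤ βs n ∧ βs n ≤ β)
    -- the sequence generated by Algorithm 1:
    -- `x (n+1)` minimizes `u ↦ D_F(u, x n) + α n • ⟪u, ∇g(x n)⟫ + βs n • ⟪u, x (n-1) - x n⟫ + α n • f u`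
    (x : ℕ → EuclideanSpace ℝ (Fin m))
    (halg : ∀ n, 1 ≤ n → ∀ u,
      ((F (x (n + 1)) - F (x n) - ⟪gradient F (x n), x (n + 1) - x n⟫
          + α n * ⟪x (n + 1), gradient g (x n)⟫
          + βs n * ⟪x (n + 1), x (n - 1) - x n⟫ : ℝ) : EReal)
        + (α n : EReal) * f (x (n + 1))
      ≤ ((F u - F (x n) - ⟪gradient F (x n), u - x n⟫
          + α n * ⟪u, gradient g (x n)⟫
          + βs n * ⟪u, x (n - 1) - x n⟫ : ℝ) : EReal)
        + (α n : EReal) * f u)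
    (y : ℕ → EuclideanSpace ℝ (Fin m))
    (hy : ∀ n, 1 ≤ n → y (n + 1) =
      (1 / α n) • (gradient F (x n) - gradient F (x (n + 1)))
      + (gradient g (x (n + 1)) - gradient g (x n))
      + (βs n / α n) • (x n - x (n - 1))) :
    ∀ n, 1 ≤ n →
      y (n + 1) ∈ limitingSubdiff (fun z => f z + ((g z : ℝ) : EReal)) (x (n + 1)) ∧
      ‖y (n + 1)‖ ≤ (LF + α n * Lg) / α n * ‖x n - x (n + 1)‖
        + βs n / α n * ‖x n - x (n - 1)‖ := by
  intro n hn
  have hα_pos : 0 < α n := hαlo.trans_le (hα n hn).1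
  let ψ : EuclideanSpace ℝ (Fin m) → ℝ := fun u => F u - F (x n) - ⟪gradient F (x n), u - x n⟫
    + α n * ⟪u, gradient g (x n)⟫ + βs n * ⟪u, x (n - 1) - x n⟫
  have hψ : HasGradientAt ψ (gradient F (x (n + 1)) - gradient F (x n)
      + α n • gradient g (x n) + βs n • (x (n - 1) - x n)) (x (n + 1)) := by
    refine hasGradientAt_iff_isLittleO.2 <| (hasGradientAt_iff_isLittleO.1
      (hFdiff _).hasGradientAt).congr_left fun u => ?_
    simp only [ψ, inner_add_left, inner_sub_left, inner_sub_right, real_inner_smul_right,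
      real_inner_comm]
    ring
  have hmin : ∀ u, ((ψ (x (n + 1)) : ℝ) : EReal) + α n * f (x (n + 1)) ≤ ψ u + α n * f u :=
    halg n hn
  have hfx : f (x (n + 1)) ≠ ⊤ := ne_top_of_forall_add_mul_le hα_pos hfproper hfbot hmin
  have hy_eq : y (n + 1) = -(1 / α n) • (gradient F (x (n + 1)) - gradient F (x n)
      + α n • gradient g (x n) + βs n • (x (n - 1) - x n)) + gradient g (x (n + 1)) := by
    rw [hy n hn]
    match_scalars <;> field_simp
  refine ⟨?_, ?_⟩
  · rw [hy_eq]
    exact frechetSubdiff_subset_limitingSubdiff _ _ <|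
      add_mem_frechetSubdiff_add_of_hasGradientAt (hfbot _)
        (neg_smul_mem_frechetSubdiff_of_forall_add_mul_le hα_pos hfbot hfx hψ hmin)
        (hgdiff _).hasGradientAt
  · rw [hy n hn]
    exact norm_smul_sub_add_sub_add_smul_le hα_pos (hβs n hn).1 hFlip hglip _ _ _

/-- Lemma 3.3: the vectors
`y_{n+1} = (∇F(x_n) - ∇F(x_{n+1}))/α_n + ∇g(x_{n+1}) - ∇g(x_n) + (β_n/α_n)(x_n - x_{n-1})`
belong to `∂(f+g)(x_{n+1})` and satisfy
`‖y_{n+1}‖ ≤ ((LF + α_n Lg)/α_n)‖x_n - x_{n+1}‖ + (β_n/α_n)‖x_n - x_{n-1}‖`. -/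
theorem stmt8
    (m : ℕ)
    (f : EuclideanSpace ℝ (Fin m) → EReal)
    -- `f` is proper (never `⊥`, somewhere finite), lower semicontinuous and bounded below
    (hfbot : ∀ z, f z ≠ ⊥) (hfproper : ∃ z, f z ≠ ⊤)
    (hflsc : LowerSemicontinuous f)
    (hfbdd : ∃ cl : ℝ, ∀ z, (cl : EReal) ≤ f z)
    -- `g` is differentiable with `Lg`-Lipschitz gradient
    (g : EuclideanSpace ℝ (Fin m) → ℝ) (Lg : ℝ) (hLg : 0 ≤ Lg)
    (hgdiff : Differentiable ℝ g)
    (hglip : ∀ z w, ‖gradient g z - gradient g w‖ ≤ Lg * ‖z - w‖)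
    -- `F` is `σ`-strongly convex and differentiable with `LF`-Lipschitz gradient
    (F : EuclideanSpace ℝ (Fin m) → ℝ) (σ LF : ℝ) (hσ : 0 < σ) (hLF : 0 < LF)
    (hFconv : ConvexOn ℝ Set.univ fun z => F z - σ / 2 * ‖z‖ ^ 2)
    (hFdiff : Differentiable ℝ F)
    (hFlip : ∀ z w, ‖gradient F z - gradient F w‖ ≤ LF * ‖z - w‖)
    -- parameters of the algorithm
    (αlo αhi β : ℝ) (hαlo : 0 < αlo) (hαorder : αlo ≤ αhi) (hβ : 0 ≤ β)
    (α βs : ℕ → ℝ)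
    (hα : ∀ n, 1 ≤ n → αlo ≤ α n ∧ α n ≤ αhi)
    (hβs : ∀ n, 1 ≤ n → 0 ≤ βs n ∧ βs n ≤ β)
    -- the sequence generated by Algorithm 1:
    -- `x (n+1)` minimizes `u ↦ D_F(u, x n) + α n • ⟪u, ∇g(x n)⟫ + βs n • ⟪u, x (n-1) - x n⟫ + α n • f u`
    (x : ℕ → EuclideanSpace ℝ (Fin m))
    (halg : ∀ n, 1 ≤ n → ∀ u,
      ((F (x (n + 1)) - F (x n) - ⟪gradient F (x n), x (n + 1) - x n⟫
          + α n * ⟪x (n + 1), gradient g (x n)⟫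
          + βs n * ⟪x (n + 1), x (n - 1) - x n⟫ : ℝ) : EReal)
        + (α n : EReal) * f (x (n + 1))
      ≤ ((F u - F (x n) - ⟪gradient F (x n), u - x n⟫
          + α n * ⟪u, gradient g (x n)⟫
          + βs n * ⟪u, x (n - 1) - x n⟫ : ℝ) : EReal)
        + (α n : EReal) * f u)
    (y : ℕ → EuclideanSpace ℝ (Fin m))
    (hy : ∀ n, 1 ≤ n → y (n + 1) =
      (1 / α n) • (gradient F (x n) - gradient F (x (n + 1)))
      + (gradient g (x (n + 1)) - gradient g (x n))
      + (βs n / α n) • (x n - x (n - 1))) :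
    ∀ n, 1 ≤ n →
      y (n + 1) ∈ limitingSubdiff (fun z => f z + ((g z : ℝ) : EReal)) (x (n + 1)) ∧
      ‖y (n + 1)‖ ≤ (LF + α n * Lg) / α n * ‖x n - x (n + 1)‖
        + βs n / α n * ‖x n - x (n - 1)‖ :=
  stmt8_general m f hfbot hfproper g Lg hgdiff hglip F LF hFdiff hFlip αlo αhi β hαlo α βs hα hβs x
    halg y hy
end
end

section
/- Let γ > 0 and x ∈ ℝ. Then the set argmin_{u∈ℝ} { (u − x)²/(2γ) − |u| } equals {x + γ} if x > 0, equals {x − γ} if x < 0, and equals {−γ, γ} if x = 0. In other words, the proximal operator of the concave function u ↦ −|u| with parameter γ is prox_{γ(−|·|)}(x) = x + γ·sgn(x) for x ≠ 0 and prox_{γ(−|·|)}(0) = {−γ, γ}. -/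
/-- The proximal operator of `u ↦ -|u|` with parameter `γ > 0`:
`argmin_u {(u-x)²/(2γ) - |u|}` equals `{x + γ}` if `x > 0`, `{x - γ}` if `x < 0`,
and `{-γ, γ}` if `x = 0`. -/
theorem stmt17 (γ : ℝ) (hγ : 0 < γ) (x : ℝ) :
    (0 < x → {u : ℝ | ∀ v : ℝ, (u - x) ^ 2 / (2 * γ) - |u| ≤ (v - x) ^ 2 / (2 * γ) - |v|}
      = {x + γ}) ∧
    (x < 0 → {u : ℝ | ∀ v : ℝ, (u - x) ^ 2 / (2 * γ) - |u| ≤ (v - x) ^ 2 / (2 * γ) - |v|}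
      = {x - γ}) ∧
    (x = 0 → {u : ℝ | ∀ v : ℝ, (u - x) ^ 2 / (2 * γ) - |u| ≤ (v - x) ^ 2 / (2 * γ) - |v|}
      = {-γ, γ}) := by
  have h2γ : (0:ℝ) < 2 * γ := by positivity
  have key : ∀ u v : ℝ,
      ((u - x) ^ 2 / (2 * γ) - |u| ≤ (v - x) ^ 2 / (2 * γ) - |v|) ↔
      (u - x) ^ 2 - 2 * γ * |u| ≤ (v - x) ^ 2 - 2 * γ * |v| := by
    intro u v
    constructor <;> intro h
    · have := mul_le_mul_of_nonneg_right h (le_of_lt h2γ)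
      have e1 := div_mul_cancel₀ ((u - x) ^ 2) (ne_of_gt h2γ)
      have e2 := div_mul_cancel₀ ((v - x) ^ 2) (ne_of_gt h2γ)
      nlinarith
    · have h' := (div_le_div_iff_of_pos_right h2γ).mpr h
      have e3 : 2 * γ * |u| / (2 * γ) = |u| := mul_div_cancel_left₀ _ (ne_of_gt h2γ)
      have e4 : 2 * γ * |v| / (2 * γ) = |v| := mul_div_cancel_left₀ _ (ne_of_gt h2γ)
      rw [sub_div, sub_div, e3, e4] at h'
      exact h'
  refine ⟨fun hx => ?_, fun hx => ?_, fun hx => ?_⟩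
  · ext u
    simp only [Set.mem_setOf_eq, Set.mem_singleton_iff]
    constructor
    · intro h
      have h1 := (key u (x + γ)).mp (h (x + γ))
      have hax : |x + γ| = x + γ := abs_of_pos (by linarith)
      rw [hax] at h1
      rcases abs_cases u with ⟨hu, hu'⟩ | ⟨hu, hu'⟩ <;> rw [hu] at h1
      · have h2 : (u - x - γ) ^ 2 = 0 := le_antisymm (by nlinarith) (sq_nonneg _)
        have := sq_eq_zero_iff.mp h2
        linarith
      · exfalso; nlinarith [sq_nonneg (u - x + γ)]
    · rintro rfl v
      rw [key]
      have hax : |x + γ| = x + γ := abs_of_pos (by linarith)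
      rw [hax]
      rcases abs_cases v with ⟨hv, _⟩ | ⟨hv, _⟩ <;> rw [hv] <;>
        nlinarith [sq_nonneg (v - x - γ), sq_nonneg (v - x + γ)]
  · ext u
    simp only [Set.mem_setOf_eq, Set.mem_singleton_iff]
    constructor
    · intro h
      have h1 := (key u (x - γ)).mp (h (x - γ))
      have hax : |x - γ| = -(x - γ) := abs_of_neg (by linarith)
      rw [hax] at h1
      rcases abs_cases u with ⟨hu, hu'⟩ | ⟨hu, hu'⟩ <;> rw [hu] at h1
      · exfalso; nlinarith [sq_nonneg (u - x - γ)]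
      · have h2 : (u - x + γ) ^ 2 = 0 := le_antisymm (by nlinarith) (sq_nonneg _)
        have := sq_eq_zero_iff.mp h2
        linarith
    · rintro rfl v
      rw [key]
      have hax : |x - γ| = -(x - γ) := abs_of_neg (by linarith)
      rw [hax]
      rcases abs_cases v with ⟨hv, _⟩ | ⟨hv, _⟩ <;> rw [hv] <;>
        nlinarith [sq_nonneg (v - x - γ), sq_nonneg (v - x + γ)]
  · subst hx
    ext u
    simp only [Set.mem_setOf_eq, Set.mem_insert_iff, Set.mem_singleton_iff]
    constructor
    · intro h
      have h1 := (key u γ).mp (h γ)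
      have hax : |γ| = γ := abs_of_pos hγ
      rw [hax] at h1
      rcases abs_cases u with ⟨hu, hu'⟩ | ⟨hu, hu'⟩ <;> rw [hu] at h1
      · right
        have h2 : (u - γ) ^ 2 = 0 := le_antisymm (by nlinarith) (sq_nonneg _)
        have := sq_eq_zero_iff.mp h2
        linarith
      · left
        have h2 : (u + γ) ^ 2 = 0 := le_antisymm (by nlinarith) (sq_nonneg _)
        have := sq_eq_zero_iff.mp h2
        linarith
    · have hax : |γ| = γ := abs_of_pos hγ
      have haxn : |(-γ)| = γ := by rw [abs_neg, hax]
      rintro hc v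
      rw [key]
      rcases hc with h' | h' <;> rw [h'] <;>
        [rw [haxn]; rw [hax]] <;>
        rcases abs_cases v with ⟨hv, _⟩ | ⟨hv, _⟩ <;> rw [hv] <;>
        nlinarith [sq_nonneg (v - γ), sq_nonneg (v + γ)]
end
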